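/- arXiv:2010.15636 — 2 statements merged into one kernel-verified Lean document; each statement's English description precedes it below -/
import Mathlib

section
/- Let U ∈ ℝ^{m×m} have SVD U = AΣBᵀ with A, B orthogonal and Σ = diag(σ_1,…,σ_m), and let r ∈ [m]. For any subset I ⊂ [m] with |I| = r, the matrix X = A Σ_I Bᵀ, where Σ_I is the diagonal matrix keeping only the singular values with indices in I (others set to 0), satisfies ⟨X, C(U)⟩_F = r · det(U), where C(U) is the cofactor matrix of U and ⟨·,·⟩_F is the Frobenius inner product. -/
/-!
Writing `U = A Σ Bᵀ` and `X = A (Σ E_I) Bᵀ` with `E_I` the 0/1 diagonal of `I`, the identities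
`adj (P Q) = adj Q adj P` and `adj P * P = det P • 1` let the outer factors cancel under the trace:
`tr (X adj U) = det A det Bᵀ tr (Σ E_I adj Σ) = det A det Bᵀ det Σ tr E_I = |I| det U`.
-/

open Matrix

namespace Matrix

variable {n R : Type*} [Fintype n] [DecidableEq n] [CommRing R]

theorem trace_mul_mul_mul_adjugate_mul_mul (A M B N : Matrix n n R) :
    trace (A * M * B * adjugate (A * N * B)) = A.det * B.det * trace (M * adjugate N) := by
  have cancel : adjugate A * (A * M * B * adjugate B * adjugate N)
      = (A.det * B.det) • (M * adjugate N) := by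
    calc adjugate A * (A * M * B * adjugate B * adjugate N)
        = adjugate A * A * M * (B * adjugate B) * adjugate N := by simp only [Matrix.mul_assoc]
      _ = _ := by
        rw [adjugate_mul, mul_adjugate, Matrix.smul_mul, Matrix.one_mul, Matrix.mul_smul,
          Matrix.mul_one, Matrix.smul_mul, Matrix.smul_mul, smul_smul, mul_comm B.det]
  rw [adjugate_mul_distrib, adjugate_mul_distrib, ← Matrix.mul_assoc, ← Matrix.mul_assoc,
    trace_mul_comm, cancel, trace_smul, smul_eq_mul]

theorem trace_mul_mul_adjugate (N E : Matrix n n R) :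
    trace (N * E * adjugate N) = N.det * trace E := by
  rw [trace_mul_cycle, adjugate_mul, Matrix.smul_mul, Matrix.one_mul, trace_smul, smul_eq_mul]

theorem diagonal_ite_mem_eq_diagonal_mul (σ : n → R) (I : Finset n) :
    diagonal (fun i => if i ∈ I then σ i else 0)
      = diagonal σ * diagonal (fun i => if i ∈ I then 1 else 0) := by
  rw [diagonal_mul_diagonal]
  simp

end Matrix

-- `(adjugate U)ᵀ` is the cofactor matrix `C(U)`, so the left side is `⟨X, C(U)⟩_F = tr (X C(U)ᵀ)`.
theorem stmt_3_general {m : ℕ} (A B : Matrix (Fin m) (Fin m) ℝ) (σ : Fin m → ℝ)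
    (U : Matrix (Fin m) (Fin m) ℝ) (hU : U = A * Matrix.diagonal σ * Bᵀ)
    (I : Finset (Fin m)) (r : ℕ) (hr : I.card = r)
    (X : Matrix (Fin m) (Fin m) ℝ)
    (hX : X = A * Matrix.diagonal (fun i => if i ∈ I then σ i else 0) * Bᵀ) :
    Matrix.trace (X * (((U.adjugate)ᵀ)ᵀ)) = (r : ℝ) * U.det := by
  have trace_indicator : trace (diagonal fun i => if i ∈ I then (1 : ℝ) else 0) = r := by
    simp [trace_diagonal, Finset.sum_ite_mem, hr]
  rw [transpose_transpose, hX, hU, diagonal_ite_mem_eq_diagonal_mul,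
    trace_mul_mul_mul_adjugate_mul_mul, trace_mul_mul_adjugate, trace_indicator, det_mul, det_mul]
  ring

/-- Let `U = A Σ Bᵀ` be an SVD of a square matrix `U`, `I ⊆ [m]` with `|I| = r`, and
`X = A Σ_I Bᵀ` the corresponding Eckart–Young critical point.  Then
`⟨X, C(U)⟩_F = r · det U`, where `C(U) = (adjugate U)ᵀ` is the cofactor matrix and
`⟨X, C⟩_F = trace (X Cᵀ)`. -/
theorem stmt_3 {m : ℕ} (A B : Matrix (Fin m) (Fin m) ℝ) (σ : Fin m → ℝ)
    (hA : A * Aᵀ = 1) (hB : B * Bᵀ = 1)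
    (U : Matrix (Fin m) (Fin m) ℝ) (hU : U = A * Matrix.diagonal σ * Bᵀ)
    (I : Finset (Fin m)) (r : ℕ) (hr : I.card = r) (hrm : r ≤ m)
    (X : Matrix (Fin m) (Fin m) ℝ)
    (hX : X = A * Matrix.diagonal (fun i => if i ∈ I then σ i else 0) * Bᵀ) :
    Matrix.trace (X * (((U.adjugate)ᵀ)ᵀ)) = (r : ℝ) * U.det :=
  stmt_3_general A B σ U hU I r hr X hX
end

section
/- Let X be an m×m matrix over a field, and let I, J ⊂ [m] with |I| = |J| ≥ 1. Then the minor of the cofactor matrix C(X) with rows I and columns J satisfies M_{I,J}(C(X)) = (−1)^{Σ_{i∈I} i + Σ_{j∈J} j} · det(X)^{|I|−1} · M_{[m]∖I, [m]∖J}(X), where M_{A,B}(Y) denotes the minor of Y with rows A and columns B. -/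
open Matrix

/-- The minor of a square matrix `Y` with rows `I` and columns `J` (in increasing order);
by convention it is `0` when `|I| ≠ |J|`, and `M_{∅,∅}(Y) = 1`. -/
noncomputable def minorOf {m : ℕ} {K : Type*} [CommRing K] (Y : Matrix (Fin m) (Fin m) K)
    (I J : Finset (Fin m)) : K :=
  if h : I.card = J.card then
    (Y.submatrix (⇑(I.orderEmbOfFin rfl)) (⇑(J.orderEmbOfFin h.symm))).det
  else 0

/-!
Enumerating `I` and then `Iᶜ` in increasing order gives a bijection `e_I : Fin k ⊕ Fin r ≃ Fin m`.
Reindexing `X` by `(e_I, e_J)` and `adj X` by `(e_J, e_I)` preserves `X * adj X = det X • 1`,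
and the reindexed `X` has determinant `(-1)^(ΣI + ΣJ) det X`: moving an element of `I` (or `J`)
down past a non-element is an adjacent transposition, and once both sets are initial segments
they coincide. If `M * N = d • 1` in block form, then
`M * [[N₁₁, 0], [N₂₁, 1]] = [[d • 1, M₁₂], [0, M₂₂]]`, so `det M * det N₁₁ = d^k * det M₂₂`.
Cancelling `det X` is legitimate for the generic matrix over `ℤ[x_ij]`, and the polynomial
identity obtained there specialises to every commutative ring.
-/

section Jacobi

open Finset Equiv

theorem Finset.orderEmbOfFin_image {α β : Type*} [LinearOrder α] [LinearOrder β] [DecidableEq β]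
    {s : Finset α} {f : α → β} (hf : StrictMonoOn f s) {k : ℕ} (hs : #s = k)
    (hfs : #(s.image f) = k) (t : Fin k) :
    (s.image f).orderEmbOfFin hfs t = f (s.orderEmbOfFin hs t) := by
  refine congrFun (orderEmbOfFin_unique hfs
    (fun t => mem_image_of_mem f (orderEmbOfFin_mem s hs t)) fun a b hab => ?_).symm t
  exact hf (orderEmbOfFin_mem s hs a) (orderEmbOfFin_mem s hs b)
    ((s.orderEmbOfFin hs).strictMono hab)

theorem Equiv.finset_image_compl {α β : Type*} [Fintype α] [Fintype β] [DecidableEq α]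
    [DecidableEq β]
    (e : α ≃ β) (s : Finset α) : sᶜ.image e = (s.image e)ᶜ := by
  rw [← coe_inj]
  push_cast
  exact e.image_compl s

theorem Finset.eq_of_isLowerSet_of_card_eq {α : Type*} [LinearOrder α] {s t : Finset α}
    (hs : IsLowerSet (s : Set α)) (ht : IsLowerSet (t : Set α)) (h : #s = #t) : s = t := by
  rcases hs.total ht with hst | hts
  · exact eq_of_subset_of_card_le (coe_subset.1 hst) h.ge
  · exact (eq_of_subset_of_card_le (coe_subset.1 hts) h.le).symm

variable {m k r : ℕ}

theorem Fin.strictMonoOn_swap {i' i : Fin m} (hadj : (i' : ℕ) + 1 = i) {s : Set (Fin m)}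
    (hs : ¬(i' ∈ s ∧ i ∈ s)) : StrictMonoOn (swap i' i) s := by
  intro a ha b hb hab
  have hpair : ¬(a = i' ∧ b = i) := fun ⟨rfl, rfl⟩ => hs ⟨ha, hb⟩
  simp only [swap_apply_def, Fin.lt_def, Fin.ext_iff] at hab hpair ⊢
  split_ifs <;> omega

theorem Fin.isLowerSet_of_forall_pred_mem {s : Finset (Fin m)}
    (h : ∀ i ∈ s, ∀ i' : Fin m, (i' : ℕ) + 1 = i → i' ∈ s) : IsLowerSet (s : Set (Fin m)) := by
  intro a b hba ha
  obtain ⟨d, hd⟩ := Nat.exists_eq_add_of_le (Fin.le_def.1 hba)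
  clear hba
  induction d generalizing a with
  | zero => rwa [show b = a from Fin.ext hd.symm]
  | succ d ih => exact ih (a := ⟨b + d, by omega⟩) (h a ha _ (by simp; omega)) rfl

theorem Fin.sum_val_image_swap_add_one {I : Finset (Fin m)} {i' i : Fin m}
    (hadj : (i' : ℕ) + 1 = i) (hi : i ∈ I) (hi' : i' ∉ I) :
    ∑ x ∈ I.image (swap i' i), (x : ℕ) + 1 = ∑ x ∈ I, (x : ℕ) := by
  rw [sum_image fun a _ b _ h => (swap i' i).injective h, ← sum_erase_add _ _ hi,
    ← sum_erase_add I _ hi, swap_apply_right]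
  have hfix : ∀ x ∈ I.erase i, ((swap i' i x : Fin m) : ℕ) = x := fun x hx =>
    congrArg _ (swap_apply_of_ne_of_ne (fun h => hi' (h ▸ mem_of_mem_erase hx))
      (ne_of_mem_erase hx))
  rw [sum_congr rfl hfix, ← hadj, add_assoc]

theorem finSumEquivOfFinset_image_swap {I : Finset (Fin m)} {i' i : Fin m}
    (hadj : (i' : ℕ) + 1 = i) (hi : i ∈ I) (hi' : i' ∉ I) (hI : #I = k) (hIc : #Iᶜ = r)
    (hsI : #(I.image (swap i' i)) = k) (hsIc : #(I.image (swap i' i))ᶜ = r) :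
    finSumEquivOfFinset hsI hsIc = (finSumEquivOfFinset hI hIc).trans (swap i' i) := by
  have hsIc' : #(Iᶜ.image (swap i' i)) = r := by rwa [finset_image_compl (swap i' i) I]
  refine Equiv.ext fun t => ?_
  rcases t with t | t
  · exact orderEmbOfFin_image (Fin.strictMonoOn_swap hadj fun h => hi' h.1) hI hsI t
  · rw [trans_apply, finSumEquivOfFinset_inr, finSumEquivOfFinset_inr,
      ← orderEmbOfFin_image (Fin.strictMonoOn_swap hadj fun h => mem_compl.1 h.2 hi) hIc hsIc' t]
    simp only [finset_image_compl (swap i' i) I]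

theorem exists_finSumEquivOfFinset_eq_trans_swap {I : Finset (Fin m)} (hI : #I = k)
    (hIc : #Iᶜ = r) (hgap : ∃ i ∈ I, ∃ i' : Fin m, (i' : ℕ) + 1 = i ∧ i' ∉ I) :
    ∃ (I' : Finset (Fin m)) (hI' : #I' = k) (hI'c : #I'ᶜ = r) (σ : Perm (Fin m)),
      ∑ i ∈ I', (i : ℕ) + 1 = ∑ i ∈ I, (i : ℕ) ∧ Perm.sign σ = -1 ∧
        finSumEquivOfFinset hI hIc = (finSumEquivOfFinset hI' hI'c).trans σ := by
  obtain ⟨i, hi, i', hadj, hi'⟩ := hgap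
  have hsI : #(I.image (swap i' i)) = k := by
    rwa [card_image_of_injective _ (swap i' i).injective]
  have hsIc : #(I.image (swap i' i))ᶜ = r := by
    rwa [← finset_image_compl (swap i' i) I, card_image_of_injective _ (swap i' i).injective]
  refine ⟨_, hsI, hsIc, swap i' i, Fin.sum_val_image_swap_add_one hadj hi hi',
    Perm.sign_swap fun h => by simp [h] at hadj, ?_⟩
  rw [finSumEquivOfFinset_image_swap hadj hi hi' hI hIc, trans_assoc, swap_swap, trans_refl]

theorem det_submatrix_finSumEquivOfFinset {R : Type*} [CommRing R]
    (A : Matrix (Fin m) (Fin m) R) {I J : Finset (Fin m)} (hI : #I = k) (hJ : #J = k)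
    (hIc : #Iᶜ = r) (hJc : #Jᶜ = r) :
    det (A.submatrix (finSumEquivOfFinset hI hIc) (finSumEquivOfFinset hJ hJc)) =
      (-1) ^ (∑ i ∈ I, (i : ℕ) + ∑ j ∈ J, (j : ℕ)) * det A := by
  induction hn : ∑ i ∈ I, (i : ℕ) + ∑ j ∈ J, (j : ℕ) using Nat.strong_induction_on
    generalizing I J A with
  | _ n ih =>
  by_cases hIgap : ∃ i ∈ I, ∃ i' : Fin m, (i' : ℕ) + 1 = i ∧ i' ∉ I
  · obtain ⟨I', hI', hI'c, σ, hsum, hσ, he⟩ :=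
      exists_finSumEquivOfFinset_eq_trans_swap hI hIc hIgap
    have hA : A.submatrix (finSumEquivOfFinset hI hIc) (finSumEquivOfFinset hJ hJc) =
        (A.submatrix σ id).submatrix (finSumEquivOfFinset hI' hI'c)
          (finSumEquivOfFinset hJ hJc) := by
      rw [he]; rfl
    rw [hA, ih _ (by omega) _ hI' hJ hI'c hJc rfl, det_permute, hσ, ← hn, ← hsum]
    push_cast
    ring
  by_cases hJgap : ∃ j ∈ J, ∃ j' : Fin m, (j' : ℕ) + 1 = j ∧ j' ∉ J
  · obtain ⟨J', hJ', hJ'c, σ, hsum, hσ, he⟩ :=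
      exists_finSumEquivOfFinset_eq_trans_swap hJ hJc hJgap
    have hA : A.submatrix (finSumEquivOfFinset hI hIc) (finSumEquivOfFinset hJ hJc) =
        (A.submatrix id σ).submatrix (finSumEquivOfFinset hI hIc)
          (finSumEquivOfFinset hJ' hJ'c) := by
      rw [he]; rfl
    rw [hA, ih _ (by omega) _ hI hJ' hIc hJ'c rfl, det_permute', hσ, ← hn, ← hsum]
    push_cast
    ring
  push Not at hIgap hJgap
  obtain rfl : I = J := eq_of_isLowerSet_of_card_eq (Fin.isLowerSet_of_forall_pred_mem hIgap)
    (Fin.isLowerSet_of_forall_pred_mem hJgap) (hI.trans hJ.symm)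
  rw [det_submatrix_equiv_self, ← hn, Even.neg_one_pow ⟨_, rfl⟩, one_mul]

theorem Matrix.det_mul_det_toBlocks₁₁ {κ ρ R : Type*} [Fintype κ] [Fintype ρ] [DecidableEq κ]
    [DecidableEq ρ] [CommRing R] {M N : Matrix (κ ⊕ ρ) (κ ⊕ ρ) R} {d : R} (h : M * N = d • 1) :
    det M * det N.toBlocks₁₁ = d ^ Fintype.card κ * det M.toBlocks₂₂ := by
  obtain ⟨A, B, C, D, rfl⟩ : ∃ A B C D, M = fromBlocks A B C D :=
    ⟨_, _, _, _, (fromBlocks_toBlocks M).symm⟩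
  obtain ⟨P, Q, S, T, rfl⟩ : ∃ P Q S T, N = fromBlocks P Q S T :=
    ⟨_, _, _, _, (fromBlocks_toBlocks N).symm⟩
  rw [fromBlocks_multiply, ← fromBlocks_one, fromBlocks_smul, smul_zero] at h
  obtain ⟨h₁₁, -, h₂₁, -⟩ := fromBlocks_inj.1 h
  have hprod : fromBlocks A B C D * fromBlocks P 0 S 1 = fromBlocks (d • 1) B 0 D := by
    rw [fromBlocks_multiply, h₁₁, h₂₁]
    simp
  simpa [det_fromBlocks_zero₂₁, det_fromBlocks_zero₁₂, det_smul] using congrArg det hprod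

theorem det_submatrix_adjugate_of_isLeftRegular {R : Type*} [CommRing R]
    (X : Matrix (Fin m) (Fin m) R) (hX : IsLeftRegular X.det) (hk : 1 ≤ k)
    {I J : Finset (Fin m)} (hI : #I = k) (hJ : #J = k) (hIc : #Iᶜ = r) (hJc : #Jᶜ = r) :
    det ((adjugate X).submatrix (J.orderEmbOfFin hJ) (I.orderEmbOfFin hI)) =
      (-1) ^ (∑ i ∈ I, (i : ℕ) + ∑ j ∈ J, (j : ℕ)) * X.det ^ (k - 1) *
        det (X.submatrix (Iᶜ.orderEmbOfFin hIc) (Jᶜ.orderEmbOfFin hJc)) := by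
  set eI := finSumEquivOfFinset hI hIc
  set eJ := finSumEquivOfFinset hJ hJc
  set s := ∑ i ∈ I, (i : ℕ) + ∑ j ∈ J, (j : ℕ)
  have hMN : X.submatrix eI eJ * (adjugate X).submatrix eJ eI = X.det • 1 := by
    rw [submatrix_mul_equiv, mul_adjugate]
    ext a b
    simp [one_apply]
  have h := det_mul_det_toBlocks₁₁ hMN
  rw [det_submatrix_finSumEquivOfFinset, Fintype.card_fin] at h
  change (-1) ^ s * X.det *
      det ((adjugate X).submatrix (J.orderEmbOfFin hJ) (I.orderEmbOfFin hI)) =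
        X.det ^ k * det (X.submatrix (Iᶜ.orderEmbOfFin hIc) (Jᶜ.orderEmbOfFin hJc)) at h
  have hsq : ((-1 : R) ^ s) ^ 2 = 1 := by rw [← pow_mul, Even.neg_one_pow ⟨_, mul_two _⟩]
  obtain ⟨k, rfl⟩ := Nat.exists_eq_add_of_le' hk
  rw [Nat.add_sub_cancel]
  apply hX
  linear_combination (-1 : R) ^ s * h -
    X.det * det ((adjugate X).submatrix (J.orderEmbOfFin hJ) (I.orderEmbOfFin hI)) * hsq

theorem det_submatrix_adjugate {R : Type*} [CommRing R] (X : Matrix (Fin m) (Fin m) R)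
    (hk : 1 ≤ k) {I J : Finset (Fin m)} (hI : #I = k) (hJ : #J = k) (hIc : #Iᶜ = r)
    (hJc : #Jᶜ = r) :
    det ((adjugate X).submatrix (J.orderEmbOfFin hJ) (I.orderEmbOfFin hI)) =
      (-1) ^ (∑ i ∈ I, (i : ℕ) + ∑ j ∈ J, (j : ℕ)) * X.det ^ (k - 1) *
        det (X.submatrix (Iᶜ.orderEmbOfFin hIc) (Jᶜ.orderEmbOfFin hJc)) := by
  let φ : MvPolynomial (Fin m × Fin m) ℤ →+* R :=
    MvPolynomial.eval₂Hom (Int.castRingHom R) fun p => X p.1 p.2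
  have hφ : (mvPolynomialX (Fin m) (Fin m) ℤ).map φ = X := by
    ext i j
    simp [φ, mvPolynomialX_apply]
  have hadj := RingHom.map_adjugate φ (mvPolynomialX (Fin m) (Fin m) ℤ)
  rw [RingHom.mapMatrix_apply, RingHom.mapMatrix_apply] at hadj
  have hgeneric := det_submatrix_adjugate_of_isLeftRegular (mvPolynomialX (Fin m) (Fin m) ℤ)
    (fun _ _ => mul_left_cancel₀ (det_mvPolynomialX_ne_zero (Fin m) ℤ)) hk hI hJ hIc hJc
  simpa [RingHom.map_det, ← submatrix_map, hadj, hφ] using congrArg φ hgeneric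

end Jacobi

/-- Jacobi complementary minor theorem: for `|I| = |J| ≥ 1`, the minor of the cofactor matrix
`C(X) = (adjugate X)ᵀ` satisfies
`M_{I,J}(C(X)) = (−1)^{Σ_{i∈I} i + Σ_{j∈J} j} det(X)^{|I|−1} M_{Iᶜ,Jᶜ}(X)`. -/
theorem stmt_4 {m : ℕ} {K : Type*} [Field K] (X : Matrix (Fin m) (Fin m) K)
    (I J : Finset (Fin m)) (h : I.card = J.card) (h1 : 1 ≤ I.card) :
    minorOf ((X.adjugate)ᵀ) I J =
      (-1 : K) ^ (∑ i ∈ I, (i : ℕ) + ∑ j ∈ J, (j : ℕ)) * X.det ^ (I.card - 1) *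
        minorOf X Iᶜ Jᶜ := by
  have hc : Iᶜ.card = Jᶜ.card := by simp [Finset.card_compl, h]
  rw [minorOf, dif_pos h, minorOf, dif_pos hc, ← transpose_submatrix, det_transpose]
  exact det_submatrix_adjugate X h1 rfl h.symm rfl hc.symm
end
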